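/- Let 1 < p < ∞, A ∈ ℝ^{n×d}, b ∈ ℝⁿ, C ∈ ℝ^{d×d}, v ∈ ℝ^d, and let OPT = min_{Cz=v} ‖Az − b‖_p^p. Let x satisfy Cx = v, set g = p·(|Ax − b|^{p−2} ⊙ (Ax − b)), and let α ≥ 1. Suppose Δ̃ is an α-approximate solution to the residual problem at x, i.e. CΔ̃ = 0 and gᵀAΔ̃ − ((p−1)/(p·2^p))·γ_p(|Ax − b|, AΔ̃) ≥ (1/α)·max_{CΔ=0} ( gᵀAΔ − ((p−1)/(p·2^p))·γ_p(|Ax − b|, AΔ) ). Then for any λ ∈ (0,1] with λ^{min{1, p−1}} ≤ (p−1)/(p·4^p), ‖A(x − λΔ̃) − b‖_p^p − OPT ≤ (1 − λ/α)·( ‖Ax − b‖_p^p − OPT ). -/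

import Mathlib

open Matrix Finset

/-- The smoothed `p`-norm function `γ_p(t,x)`. -/
noncomputable def gammaFn (p t x : ℝ) : ℝ :=
  if |x| ≤ t then (p / 2) * t ^ (p - 2) * x ^ 2
  else |x| ^ p + (p / 2 - 1) * t ^ p

/-- Objective of the residual problem at `x` for `min_{Cx=v} ‖Ax−b‖_p^p`:
`Δ ↦ gᵀAΔ − ((p−1)/(p·2^p))·γ_p(|Ax−b|, AΔ)` where
`g = p(|Ax−b|^{p−2} ⊙ (Ax−b))`. -/
noncomputable def resObj {n d : ℕ} (p : ℝ) (A : Matrix (Fin n) (Fin d) ℝ)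
    (b : Fin n → ℝ) (x : Fin d → ℝ) (Δ : Fin d → ℝ) : ℝ :=
  (∑ i, (p * |(A.mulVec x - b) i| ^ (p - 2) * (A.mulVec x - b) i) * (A.mulVec Δ) i)
    - ((p - 1) / (p * 2 ^ p))
        * ∑ i, gammaFn p (|(A.mulVec x - b) i|) ((A.mulVec Δ) i)

/-!
Write `r = Ax − b`, `c = (p−1)/(p·2^p)` and `g_f = p|f|^{p−2}f`. The whole argument rests on a
two-sided bound for the Bregman divergence of `|·|^p`: for all reals `f, δ`,
`c·γ_p(|f|, δ) ≤ |f + δ|^p − |f|^p − g_f·δ ≤ 2^p·γ_p(|f|, δ)`.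
Both sides are `p`-homogeneous in `(f, δ)`, so it suffices to take `f = 1`. There both sides vanish
at `δ = 0`, and on each of `[0,1]`, `[1,∞)` (and their mirror images) their derivatives compare by
elementary estimates on `(1+s)^{p−1}` and `|1−w|^{p−1}`; the two pieces of `γ_p(1, ·)` agree at
`±1`, so the comparison on `[1,∞)` starts where the one on `[0,1]` ends.

Summing the lower bound over coordinates at `δ = A(z − x)`, with `z` optimal, gives
`‖r‖_p^p − OPT ≤ resObj(x − z) ≤ M`. Summing the upper bound at `δ = −λAΔ̃`, together with
`γ_p(t, λy) ≤ λ^{1+min(1,p−1)}γ_p(t, y)` and the hypothesis on `λ`, shows that the step decreases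
`‖r‖_p^p` by at least `λ·resObj(Δ̃) ≥ (λ/α)·M`.
-/

open Real Set

-- The tangent line of the concave `x ↦ x ^ q` at `1 + s`, evaluated at `1`.
lemma mul_mul_rpow_le_one_add_rpow_sub_one {q s : ℝ} (hq0 : 0 ≤ q) (hq1 : q ≤ 1) (hs : 0 ≤ s) :
    q * s * (1 + s) ^ (q - 1) ≤ (1 + s) ^ q - 1 := by
  have ha : 0 < 1 + s := by linarith
  have hb := rpow_one_add_le_one_add_mul_self (s := -(s / (1 + s)))
    (by rw [neg_le_neg_iff, div_le_one ha]; linarith) hq0 hq1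
  rw [show 1 + -(s / (1 + s)) = (1 + s)⁻¹ by field_simp; ring, inv_rpow ha.le,
    inv_le_iff_one_le_mul₀ (rpow_pos_of_pos ha q)] at hb
  rw [rpow_sub_one ha.ne']
  have hexp : (1 + s) ^ q * (1 + q * -(s / (1 + s)))
      = (1 + s) ^ q - q * s * ((1 + s) ^ q / (1 + s)) := by ring
  linarith

lemma one_half_le_two_rpow_sub_one {q : ℝ} (hq : 0 ≤ q) : (1 / 2 : ℝ) ≤ 2 ^ (q - 1) := by
  rw [show (1 / 2 : ℝ) = 2 ^ (-1 : ℝ) by norm_num]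
  exact rpow_le_rpow_of_exponent_le one_le_two (by linarith)

lemma one_add_rpow_sub_one_bounds_of_le_one {q s : ℝ} (hq : 0 < q) (hs0 : 0 ≤ s) (hs1 : s ≤ 1) :
    min q 1 / 2 * s ≤ (1 + s) ^ q - 1 ∧ (1 + s) ^ q - 1 ≤ 2 ^ q * s := by
  have h2q : 1 ≤ (2 : ℝ) ^ q := one_le_rpow one_le_two hq.le
  rcases le_total q 1 with hq1 | hq1
  · refine ⟨?_, ?_⟩
    · have h := mul_mul_rpow_le_one_add_rpow_sub_one hq.le hq1 hs0
      have h2 : (2 : ℝ) ^ (q - 1) ≤ (1 + s) ^ (q - 1) :=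
        rpow_le_rpow_of_nonpos (by linarith) (by linarith) (by linarith)
      have h3 := one_half_le_two_rpow_sub_one hq.le
      rw [min_eq_left hq1]
      nlinarith [mul_nonneg hq.le hs0]
    · have := rpow_one_add_le_one_add_mul_self (by linarith : -1 ≤ s) hq.le hq1
      nlinarith
  · refine ⟨?_, ?_⟩
    · have := one_add_mul_self_le_rpow_one_add (by linarith : -1 ≤ s) hq1
      rw [min_eq_right hq1]
      nlinarith
    · have h := (convexOn_rpow hq1).2 (mem_Ici.mpr zero_le_one) (mem_Ici.mpr zero_le_two)
        (by linarith : 0 ≤ 1 - s) hs0 (by ring)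
      simp only [smul_eq_mul, one_rpow] at h
      rw [show (1 - s) * 1 + s * 2 = 1 + s by ring] at h
      nlinarith

lemma one_add_rpow_sub_one_bounds_of_one_le {q s : ℝ} (hq : 0 < q) (hs : 1 ≤ s) :
    min q 1 / 2 * s ^ q ≤ (1 + s) ^ q - 1 ∧ (1 + s) ^ q - 1 ≤ 2 ^ q * s ^ q := by
  have hs0 : 0 < s := by linarith
  have h1 : 1 ≤ s ^ q := one_le_rpow hs hq.le
  refine ⟨?_, ?_⟩
  · rcases le_total q 1 with hq1 | hq1
    · have h := mul_mul_rpow_le_one_add_rpow_sub_one hq.le hq1 hs0.le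
      have h2 : (2 * s) ^ (q - 1) ≤ (1 + s) ^ (q - 1) :=
        rpow_le_rpow_of_nonpos (by linarith) (by linarith) (by linarith)
      have h3 := one_half_le_two_rpow_sub_one hq.le
      rw [mul_rpow zero_le_two hs0.le, rpow_sub_one hs0.ne'] at h2
      rw [min_eq_left hq1]
      have h4 : s * (s ^ q / s) = s ^ q := by field_simp
      have hqs : 0 ≤ q * s := mul_nonneg hq.le hs0.le
      have h5 : 0 ≤ s ^ q / s := div_nonneg (rpow_nonneg hs0.le q) hs0.le
      calc q / 2 * s ^ q = q * s * (1 / 2 * (s ^ q / s)) := by linear_combination (-q / 2) * h4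
        _ ≤ q * s * (2 ^ (q - 1) * (s ^ q / s)) := by gcongr
        _ ≤ q * s * (1 + s) ^ (q - 1) := by gcongr
        _ ≤ (1 + s) ^ q - 1 := h
    · have := add_rpow_le_rpow_add zero_le_one hs0.le hq1
      rw [one_rpow] at this
      rw [min_eq_right hq1]
      nlinarith
  · have h := rpow_le_rpow (by linarith) (by linarith : 1 + s ≤ 2 * s) hq.le
    rw [mul_rpow zero_le_two hs0.le] at h
    linarith

lemma one_sub_rpow_bounds {q w : ℝ} (hq : 0 < q) (hw0 : 0 ≤ w) (hw1 : w ≤ 1) :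
    min q 1 * w ≤ 1 - (1 - w) ^ q ∧ 1 - (1 - w) ^ q ≤ 2 ^ q * w := by
  have h2q : 1 ≤ (2 : ℝ) ^ q := one_le_rpow one_le_two hq.le
  rcases le_total q 1 with hq1 | hq1
  · have hl := rpow_one_add_le_one_add_mul_self (by linarith : -1 ≤ -w) hq.le hq1
    have hu := self_le_rpow_of_le_one (by linarith : 0 ≤ 1 - w) (by linarith) hq1
    rw [← sub_eq_add_neg] at hl
    rw [min_eq_left hq1]
    constructor <;> nlinarith
  · have hl := rpow_le_self_of_le_one (by linarith : 0 ≤ 1 - w) (by linarith) hq1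
    have hu := one_add_mul_self_le_rpow_one_add (by linarith : -1 ≤ -w) hq1
    have h2 := one_add_mul_self_le_rpow_one_add (by norm_num : (-1 : ℝ) ≤ 1) hq1
    norm_num at h2
    rw [← sub_eq_add_neg] at hu
    rw [min_eq_right hq1]
    constructor <;> nlinarith

lemma sub_one_rpow_add_one_bounds {q w : ℝ} (hq : 0 < q) (hw : 1 ≤ w) :
    w ^ q ≤ 2 ^ q * ((w - 1) ^ q + 1) ∧ (w - 1) ^ q + 1 ≤ 2 * w ^ q := by
  have hw0 : 0 ≤ w := by linarith
  have hpos : 0 ≤ (w - 1) ^ q := rpow_nonneg (by linarith) q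
  refine ⟨?_, ?_⟩
  · rw [← div_le_iff₀' (rpow_pos_of_pos two_pos q), ← div_rpow hw0 zero_le_two]
    rcases le_total (w / 2) 1 with h | h
    · have := rpow_le_one (by positivity) h hq.le
      linarith
    · have := rpow_le_rpow (by positivity) (by linarith : w / 2 ≤ w - 1) hq.le
      linarith
  · have h1 := rpow_le_rpow (by linarith) (by linarith : w - 1 ≤ w) hq.le
    have h2 := one_le_rpow hw hq.le
    linarith

lemma le_of_hasDerivAt_le {s : Set ℝ} (hs : Convex ℝ s) {a : ℝ} (ha : IsLeast s a)
    {f g f' g' : ℝ → ℝ} (hf : ∀ x, HasDerivAt f (f' x) x) (hg : ∀ x, HasDerivAt g (g' x) x)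
    (hfga : f a ≤ g a) (hfg' : ∀ x ∈ interior s, f' x ≤ g' x) : ∀ x ∈ s, f x ≤ g x := by
  have hd : ∀ x, HasDerivAt (fun x => g x - f x) (g' x - f' x) x := fun x => (hg x).sub (hf x)
  have hmono : MonotoneOn (fun x => g x - f x) s :=
    monotoneOn_of_deriv_nonneg hs (fun x _ => (hd x).continuousAt.continuousWithinAt)
      (fun x _ => (hd x).differentiableAt.differentiableWithinAt)
      (fun x hx => by rw [(hd x).deriv]; exact sub_nonneg.2 (hfg' x hx))
  intro x hx
  have := hmono ha.1 hx (ha.2 hx)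
  simp only at this
  linarith

section SmoothedPower

lemma gammaFn_one (p s : ℝ) :
    gammaFn p 1 s = if |s| ≤ 1 then p / 2 * s ^ 2 else |s| ^ p + (p / 2 - 1) := by
  simp [gammaFn]

lemma gammaFn_abs (p t x : ℝ) : gammaFn p t |x| = gammaFn p t x := by
  simp [gammaFn, sq_abs]

lemma gammaFn_neg (p t x : ℝ) : gammaFn p t (-x) = gammaFn p t x := by
  rw [← gammaFn_abs, abs_neg, gammaFn_abs]

lemma gammaFn_zero_left {p : ℝ} (hp : 0 < p) (x : ℝ) : gammaFn p 0 x = |x| ^ p := by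
  rcases eq_or_ne x 0 with rfl | hx
  · simp [gammaFn, zero_rpow hp.ne']
  · simp [gammaFn, hx, zero_rpow hp.ne']

lemma gammaFn_eq_rpow_mul {p t : ℝ} (ht : 0 < t) (x : ℝ) :
    gammaFn p t x = t ^ p * gammaFn p 1 (x / t) := by
  have htp : t ^ p = t ^ (p - 2) * t ^ 2 := by
    rw [← rpow_natCast, ← rpow_add ht]; norm_num
  simp only [gammaFn, one_rpow, mul_one, abs_div, abs_of_pos ht, div_le_one ht,
    div_rpow (abs_nonneg x) ht.le]
  split_ifs
  · rw [htp]; field_simp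
  · field_simp

lemma gammaFn_nonneg {p t : ℝ} (hp : 0 ≤ p) (ht : 0 ≤ t) (x : ℝ) : 0 ≤ gammaFn p t x := by
  unfold gammaFn
  split_ifs with h
  · positivity
  · have := rpow_le_rpow ht (not_le.1 h).le hp
    nlinarith [rpow_nonneg ht p]

end SmoothedPower

section Bregman

variable {p : ℝ}

lemma smoothing_const_bounds (hp : 1 < p) :
    0 ≤ (p - 1) / (p * 2 ^ p) ∧ (p - 1) / (p * 2 ^ p) ≤ min (p - 1) 1 / 2 ∧
      (p - 1) / (p * 2 ^ p) * 2 ^ (p - 1) ≤ 1 := by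
  have h2 : (2 : ℝ) ^ p = 2 * 2 ^ (p - 1) := by
    rw [← rpow_one_add' zero_le_two (by linarith)]; norm_num
  have h1 : 1 ≤ (2 : ℝ) ^ (p - 1) := one_le_rpow one_le_two (by linarith)
  have hp0 : 0 < p := by linarith
  have h3 : 1 ≤ p * 2 ^ (p - 1) := by nlinarith
  rw [h2]
  refine ⟨by positivity, ?_, ?_⟩
  · rw [le_div_iff₀ two_pos]
    refine le_min ?_ ?_ <;> rw [div_mul_eq_mul_div, div_le_iff₀ (by positivity)] <;>
      nlinarith [mul_le_mul_of_nonneg_left h3 (sub_nonneg.2 hp.le)]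
  · rw [div_mul_eq_mul_div, div_le_one (by positivity)]; nlinarith

lemma hasDerivAt_quadratic_piece (K s : ℝ) :
    HasDerivAt (fun s => K * (p / 2 * s ^ 2)) (K * (p * s)) s :=
  ((hasDerivAt_pow 2 s).const_mul (p / 2)).const_mul K |>.congr_deriv (by push_cast; ring)

lemma hasDerivAt_rpow_piece (hp : 1 ≤ p) (K s : ℝ) :
    HasDerivAt (fun s => K * (s ^ p + (p / 2 - 1))) (K * (p * s ^ (p - 1))) s :=
  ((hasDerivAt_rpow_const (Or.inr hp)).add_const _).const_mul K

lemma hasDerivAt_one_add_rpow_sub (hp : 1 ≤ p) (s : ℝ) :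
    HasDerivAt (fun s => (1 + s) ^ p - 1 - p * s) (p * ((1 + s) ^ (p - 1) - 1)) s :=
  ((((hasDerivAt_id s).const_add 1).rpow_const (Or.inr hp)).sub_const 1).sub
    ((hasDerivAt_id s).const_mul p) |>.congr_deriv (by simp only [id]; ring)

lemma hasDerivAt_one_sub_rpow_add (hp : 1 ≤ p) (w : ℝ) :
    HasDerivAt (fun w => (1 - w) ^ p - 1 + p * w) (p * (1 - (1 - w) ^ (p - 1))) w :=
  ((((hasDerivAt_id w).const_sub 1).rpow_const (Or.inr hp)).sub_const 1).add
    ((hasDerivAt_id w).const_mul p) |>.congr_deriv (by simp only [id]; ring)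

lemma hasDerivAt_sub_one_rpow_add (hp : 1 ≤ p) (w : ℝ) :
    HasDerivAt (fun w => (w - 1) ^ p - 1 + p * w) (p * ((w - 1) ^ (p - 1) + 1)) w :=
  ((((hasDerivAt_id w).sub_const 1).rpow_const (Or.inr hp)).sub_const 1).add
    ((hasDerivAt_id w).const_mul p) |>.congr_deriv (by simp only [id]; ring)

lemma bregman_one_add_bounds (hp : 1 < p) {s : ℝ} (hs : 0 ≤ s) :
    (p - 1) / (p * 2 ^ p) * gammaFn p 1 s ≤ (1 + s) ^ p - 1 - p * s ∧
      (1 + s) ^ p - 1 - p * s ≤ 2 ^ p * gammaFn p 1 s := by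
  obtain ⟨-, hc, -⟩ := smoothing_const_bounds hp
  set c := (p - 1) / (p * 2 ^ p)
  have hq : 0 < p - 1 := sub_pos.2 hp
  have hp0 : 0 < p := by linarith
  have h2 : (2 : ℝ) ^ (p - 1) ≤ 2 ^ p := rpow_le_rpow_of_exponent_le one_le_two (by linarith)
  have lo₁ : ∀ s ∈ Icc (0 : ℝ) 1, c * (p / 2 * s ^ 2) ≤ (1 + s) ^ p - 1 - p * s :=
    le_of_hasDerivAt_le (convex_Icc 0 1) (isLeast_Icc zero_le_one) (hasDerivAt_quadratic_piece c)
      (hasDerivAt_one_add_rpow_sub hp.le) (by simp) fun s hs => by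
        rw [interior_Icc] at hs
        have := (one_add_rpow_sub_one_bounds_of_le_one hq hs.1.le hs.2.le).1
        nlinarith [mul_le_mul_of_nonneg_right hc hs.1.le]
  have lo₂ : ∀ s ∈ Ici (1 : ℝ), c * (s ^ p + (p / 2 - 1)) ≤ (1 + s) ^ p - 1 - p * s :=
    le_of_hasDerivAt_le (convex_Ici 1) isLeast_Ici (hasDerivAt_rpow_piece hp.le c)
      (hasDerivAt_one_add_rpow_sub hp.le) (by simpa using lo₁ 1 (right_mem_Icc.2 zero_le_one))
      fun s hs => by
        rw [interior_Ici] at hs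
        have := (one_add_rpow_sub_one_bounds_of_one_le hq hs.le).1
        nlinarith [mul_le_mul_of_nonneg_right hc (rpow_nonneg (zero_le_one.trans hs.le) (p - 1))]
  have up₁ : ∀ s ∈ Icc (0 : ℝ) 1, (1 + s) ^ p - 1 - p * s ≤ 2 ^ p * (p / 2 * s ^ 2) :=
    le_of_hasDerivAt_le (convex_Icc 0 1) (isLeast_Icc zero_le_one)
      (hasDerivAt_one_add_rpow_sub hp.le) (hasDerivAt_quadratic_piece _) (by simp) fun s hs => by
        rw [interior_Icc] at hs
        have := (one_add_rpow_sub_one_bounds_of_le_one hq hs.1.le hs.2.le).2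
        nlinarith [mul_le_mul_of_nonneg_right h2 hs.1.le]
  have up₂ : ∀ s ∈ Ici (1 : ℝ), (1 + s) ^ p - 1 - p * s ≤ 2 ^ p * (s ^ p + (p / 2 - 1)) :=
    le_of_hasDerivAt_le (convex_Ici 1) isLeast_Ici (hasDerivAt_one_add_rpow_sub hp.le)
      (hasDerivAt_rpow_piece hp.le _) (by simpa using up₁ 1 (right_mem_Icc.2 zero_le_one))
      fun s hs => by
        rw [interior_Ici] at hs
        have := (one_add_rpow_sub_one_bounds_of_one_le hq hs.le).2
        nlinarith [mul_le_mul_of_nonneg_right h2 (rpow_nonneg (zero_le_one.trans hs.le) (p - 1))]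
  rw [gammaFn_one]
  split_ifs with h
  · exact ⟨lo₁ s ⟨hs, (abs_le.1 h).2⟩, up₁ s ⟨hs, (abs_le.1 h).2⟩⟩
  · rw [abs_of_nonneg hs] at h ⊢
    exact ⟨lo₂ s (not_le.1 h).le, up₂ s (not_le.1 h).le⟩

lemma bregman_one_sub_bounds (hp : 1 < p) {w : ℝ} (hw : 0 ≤ w) :
    (p - 1) / (p * 2 ^ p) * gammaFn p 1 w ≤ |1 - w| ^ p - 1 + p * w ∧
      |1 - w| ^ p - 1 + p * w ≤ 2 ^ p * gammaFn p 1 w := by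
  obtain ⟨hc₀, hc, hc_pow⟩ := smoothing_const_bounds hp
  set c := (p - 1) / (p * 2 ^ p)
  have hq : 0 < p - 1 := sub_pos.2 hp
  have hp0 : 0 < p := by linarith
  have h2 : (2 : ℝ) ^ (p - 1) ≤ 2 ^ p := rpow_le_rpow_of_exponent_le one_le_two (by linarith)
  have h2' : (2 : ℝ) ≤ 2 ^ p := by simpa using rpow_le_rpow_of_exponent_le one_le_two hp.le
  have hm : c ≤ min (p - 1) 1 := by linarith [le_min hq.le zero_le_one]
  have lo₁ : ∀ w ∈ Icc (0 : ℝ) 1, c * (p / 2 * w ^ 2) ≤ (1 - w) ^ p - 1 + p * w :=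
    le_of_hasDerivAt_le (convex_Icc 0 1) (isLeast_Icc zero_le_one) (hasDerivAt_quadratic_piece c)
      (hasDerivAt_one_sub_rpow_add hp.le) (by simp) fun w hw => by
        rw [interior_Icc] at hw
        have := (one_sub_rpow_bounds hq hw.1.le hw.2.le).1
        nlinarith [mul_le_mul_of_nonneg_right hm hw.1.le]
  have lo₂ : ∀ w ∈ Ici (1 : ℝ), c * (w ^ p + (p / 2 - 1)) ≤ (w - 1) ^ p - 1 + p * w :=
    le_of_hasDerivAt_le (convex_Ici 1) isLeast_Ici (hasDerivAt_rpow_piece hp.le c)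
      (hasDerivAt_sub_one_rpow_add hp.le)
      (by simpa [zero_rpow hp0.ne'] using lo₁ 1 (right_mem_Icc.2 zero_le_one)) fun w hw => by
        rw [interior_Ici] at hw
        have := (sub_one_rpow_add_one_bounds hq hw.le).1
        have hX : 0 ≤ (w - 1) ^ (p - 1) + 1 :=
          add_nonneg (rpow_nonneg (sub_nonneg.2 hw.le) _) zero_le_one
        nlinarith [mul_le_mul_of_nonneg_left this hc₀, mul_le_mul_of_nonneg_right hc_pow hX]
  have up₁ : ∀ w ∈ Icc (0 : ℝ) 1, (1 - w) ^ p - 1 + p * w ≤ 2 ^ p * (p / 2 * w ^ 2) :=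
    le_of_hasDerivAt_le (convex_Icc 0 1) (isLeast_Icc zero_le_one)
      (hasDerivAt_one_sub_rpow_add hp.le) (hasDerivAt_quadratic_piece _) (by simp) fun w hw => by
        rw [interior_Icc] at hw
        have := (one_sub_rpow_bounds hq hw.1.le hw.2.le).2
        nlinarith [mul_le_mul_of_nonneg_right h2 hw.1.le]
  have up₂ : ∀ w ∈ Ici (1 : ℝ), (w - 1) ^ p - 1 + p * w ≤ 2 ^ p * (w ^ p + (p / 2 - 1)) :=
    le_of_hasDerivAt_le (convex_Ici 1) isLeast_Ici (hasDerivAt_sub_one_rpow_add hp.le)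
      (hasDerivAt_rpow_piece hp.le _)
      (by simpa [zero_rpow hp0.ne'] using up₁ 1 (right_mem_Icc.2 zero_le_one)) fun w hw => by
        rw [interior_Ici] at hw
        have := (sub_one_rpow_add_one_bounds hq hw.le).2
        nlinarith [mul_le_mul_of_nonneg_right h2' (rpow_nonneg (zero_le_one.trans hw.le) (p - 1))]
  rw [gammaFn_one, abs_of_nonneg hw]
  split_ifs with h
  · rw [abs_of_nonneg (sub_nonneg.2 h)]
    exact ⟨lo₁ w ⟨hw, h⟩, up₁ w ⟨hw, h⟩⟩
  · rw [abs_sub_comm, abs_of_nonneg (by linarith)]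
    exact ⟨lo₂ w (not_le.1 h).le, up₂ w (not_le.1 h).le⟩

theorem rpow_bregman_one_bounds (hp : 1 < p) (s : ℝ) :
    (p - 1) / (p * 2 ^ p) * gammaFn p 1 s ≤ |1 + s| ^ p - 1 - p * s ∧
      |1 + s| ^ p - 1 - p * s ≤ 2 ^ p * gammaFn p 1 s := by
  rcases le_total 0 s with hs | hs
  · rw [abs_of_nonneg (by linarith)]
    exact bregman_one_add_bounds hp hs
  · have h := bregman_one_sub_bounds hp (neg_nonneg.2 hs)
    rwa [gammaFn_neg, sub_neg_eq_add, mul_neg, ← sub_eq_add_neg] at h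

theorem rpow_bregman_bounds (hp : 1 < p) (f δ : ℝ) :
    (p - 1) / (p * 2 ^ p) * gammaFn p |f| δ ≤ |f + δ| ^ p - |f| ^ p - p * |f| ^ (p - 2) * f * δ ∧
      |f + δ| ^ p - |f| ^ p - p * |f| ^ (p - 2) * f * δ ≤ 2 ^ p * gammaFn p |f| δ := by
  have hp0 : 0 < p := by linarith
  rcases eq_or_ne f 0 with rfl | hf
  · obtain ⟨-, hc, -⟩ := smoothing_const_bounds hp
    have h2 : 1 ≤ (2 : ℝ) ^ p := one_le_rpow one_le_two hp0.le
    have hδ : 0 ≤ |δ| ^ p := rpow_nonneg (abs_nonneg δ) p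
    simp only [abs_zero, zero_rpow hp0.ne', mul_zero, zero_mul, zero_add, sub_zero,
      gammaFn_zero_left hp0]
    constructor <;> nlinarith [min_le_right (p - 1) 1]
  · have ht : 0 < |f| := abs_pos.2 hf
    have hscale : |f + δ| ^ p - |f| ^ p - p * |f| ^ (p - 2) * f * δ
        = |f| ^ p * (|1 + δ / f| ^ p - 1 - p * (δ / f)) := by
      have h1 : |f + δ| = |f| * |1 + δ / f| := by rw [← abs_mul]; congr 1; field_simp
      have h2 : |f| ^ p = |f| ^ (p - 2) * f ^ 2 := by
        rw [← sq_abs, ← rpow_natCast, ← rpow_add ht]; norm_num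
      rw [h1, mul_rpow ht.le (abs_nonneg _), h2]
      field_simp
    have hγ : gammaFn p |f| δ = |f| ^ p * gammaFn p 1 (δ / f) := by
      rw [gammaFn_eq_rpow_mul ht, ← gammaFn_abs p 1 (δ / f), ← gammaFn_abs p 1 (δ / |f|), abs_div,
        abs_div, abs_abs]
    obtain ⟨hlo, hup⟩ := rpow_bregman_one_bounds hp (δ / f)
    have hfp : 0 < |f| ^ p := rpow_pos_of_pos ht p
    rw [hscale, hγ]
    constructor <;>
      nlinarith [mul_le_mul_of_nonneg_left hlo hfp.le, mul_le_mul_of_nonneg_left hup hfp.le]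

end Bregman

section Scaling

variable {p lam : ℝ}

lemma gammaFn_one_mul_le_of_le_two (hp : 1 < p) (hp2 : p ≤ 2) (hl0 : 0 < lam) (hl1 : lam ≤ 1)
    {x : ℝ} (hx : 0 ≤ x) : gammaFn p 1 (lam * x) ≤ lam ^ p * gammaFn p 1 x := by
  have hlx : 0 ≤ lam * x := by positivity
  have hlp : lam ^ p ≤ 1 := rpow_le_one hl0.le hl1 (by linarith)
  rw [gammaFn_one, gammaFn_one, abs_of_nonneg hlx, abs_of_nonneg hx, mul_rpow hl0.le hx]
  split_ifs with h₁ h₂ h₂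
  · have h := rpow_le_rpow_of_exponent_ge hl0 hl1 hp2
    rw [rpow_two] at h
    nlinarith [mul_le_mul_of_nonneg_right h (by positivity : 0 ≤ p / 2 * x ^ 2)]
  · have h := rpow_le_rpow_of_exponent_ge' hlx h₁ (by linarith) hp2
    have hxp : 1 ≤ x ^ p := one_le_rpow (not_le.1 h₂).le (by linarith)
    rw [rpow_two, mul_rpow hl0.le hx] at h
    nlinarith [mul_le_mul_of_nonneg_left h (by linarith : 0 ≤ p / 2),
      mul_nonneg (rpow_nonneg hl0.le p)
        (mul_nonneg (by linarith : 0 ≤ 1 - p / 2) (sub_nonneg.2 hxp))]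
  · exact absurd ((mul_le_of_le_one_left hx hl1).trans h₂) h₁
  · nlinarith

lemma one_add_mul_sub_le_rpow (hp : 2 ≤ p) (hl0 : 0 < lam) :
    1 + (p / 2 - 1) * (1 - lam ^ 2) ≤ lam ^ (2 - p) := by
  have hexp := add_one_le_exp (log lam * (2 - p))
  have hlog := log_le_sub_one_of_pos hl0
  rw [← rpow_def_of_pos hl0] at hexp
  nlinarith [mul_le_mul_of_nonneg_left hlog (by linarith : 0 ≤ p - 2),
    mul_nonneg (by linarith : 0 ≤ p - 2) (sq_nonneg (1 - lam))]

lemma gammaFn_one_mul_le_of_two_le (hp : 2 ≤ p) (hl0 : 0 < lam) (hl1 : lam ≤ 1)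
    {x : ℝ} (hx : 0 ≤ x) : gammaFn p 1 (lam * x) ≤ lam ^ 2 * gammaFn p 1 x := by
  have hlx : 0 ≤ lam * x := by positivity
  rw [gammaFn_one, gammaFn_one, abs_of_nonneg hlx, abs_of_nonneg hx]
  split_ifs with h₁ h₂ h₂
  · nlinarith
  · have h := one_add_mul_self_le_rpow_one_add (by nlinarith : -1 ≤ x ^ 2 - 1)
      (by linarith : 1 ≤ p / 2)
    rw [add_sub_cancel, ← rpow_natCast, ← rpow_mul hx] at h
    rw [show ((2 : ℕ) : ℝ) * (p / 2) = p by push_cast; ring, rpow_natCast] at h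
    nlinarith [mul_le_mul_of_nonneg_left h (sq_nonneg lam)]
  · exact absurd ((mul_le_of_le_one_left hx hl1).trans h₂) h₁
  · have h := one_add_mul_sub_le_rpow hp hl0
    have hlxp : 1 ≤ (lam * x) ^ p := one_le_rpow (not_le.1 h₁).le (by linarith)
    have hsplit : lam ^ 2 * x ^ p = lam ^ (2 - p) * (lam * x) ^ p := by
      rw [mul_rpow hl0.le hx, ← mul_assoc, ← rpow_add hl0]; norm_num
    nlinarith [mul_le_mul_of_nonneg_right h (zero_le_one.trans hlxp),
      mul_nonneg (mul_nonneg (by linarith : 0 ≤ p / 2 - 1) (by nlinarith : 0 ≤ 1 - lam ^ 2))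
        (sub_nonneg.2 hlxp)]

lemma gammaFn_mul_le (hp : 1 < p) {t : ℝ} (ht : 0 ≤ t) (hl0 : 0 < lam) (hl1 : lam ≤ 1) (x : ℝ) :
    gammaFn p t (lam * x) ≤ lam ^ (1 + min 1 (p - 1)) * gammaFn p t x := by
  have hone : ∀ s, gammaFn p 1 (lam * s) ≤ lam ^ (1 + min 1 (p - 1)) * gammaFn p 1 s := by
    intro s
    rw [← gammaFn_abs p 1 s, ← gammaFn_abs p 1 (lam * s), abs_mul, abs_of_pos hl0]
    rcases le_total p 2 with h | h
    · rw [min_eq_right (by linarith), add_sub_cancel]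
      exact gammaFn_one_mul_le_of_le_two hp h hl0 hl1 (abs_nonneg s)
    · rw [min_eq_left (by linarith), one_add_one_eq_two, rpow_two]
      exact gammaFn_one_mul_le_of_two_le h hl0 hl1 (abs_nonneg s)
  rcases ht.eq_or_lt with rfl | ht
  · have h := rpow_le_rpow_of_exponent_ge hl0 hl1
      (by linarith [min_le_right 1 (p - 1)] : 1 + min 1 (p - 1) ≤ p)
    rw [gammaFn_zero_left (by linarith), gammaFn_zero_left (by linarith), abs_mul,
      abs_of_pos hl0, mul_rpow hl0.le (abs_nonneg x)]
    exact mul_le_mul_of_nonneg_right h (rpow_nonneg (abs_nonneg x) p)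
  · have h := mul_le_mul_of_nonneg_left (hone (x / t)) (rpow_nonneg ht.le p)
    rw [gammaFn_eq_rpow_mul ht, gammaFn_eq_rpow_mul ht, mul_div_assoc]
    linarith

end Scaling

section ResidualProblem

variable {n d : ℕ} {p : ℝ}

lemma rpow_sub_rpow_sub_le (hp : 1 < p) (f w : ℝ) :
    |f| ^ p - |f - w| ^ p ≤
      p * |f| ^ (p - 2) * f * w - (p - 1) / (p * 2 ^ p) * gammaFn p |f| w := by
  have h := (rpow_bregman_bounds hp f (-w)).1
  rw [gammaFn_neg, ← sub_eq_add_neg] at h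
  linarith

lemma rpow_sub_mul_le {lam : ℝ} (hp : 1 < p) (hl0 : 0 < lam) (hl1 : lam ≤ 1)
    (hlam : lam ^ (min 1 (p - 1)) ≤ (p - 1) / (p * 4 ^ p)) (f u : ℝ) :
    |f - lam * u| ^ p ≤
      |f| ^ p - lam * (p * |f| ^ (p - 2) * f * u - (p - 1) / (p * 2 ^ p) * gammaFn p |f| u) := by
  have h := (rpow_bregman_bounds hp f (-(lam * u))).2
  rw [gammaFn_neg, ← sub_eq_add_neg] at h
  have hγ := gammaFn_mul_le hp (abs_nonneg f) hl0 hl1 u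
  have hγ0 := gammaFn_nonneg (by linarith : 0 ≤ p) (abs_nonneg f) u
  have h2p : (0 : ℝ) < 2 ^ p := rpow_pos_of_pos two_pos p
  have hc : 2 ^ p * ((p - 1) / (p * 4 ^ p)) = (p - 1) / (p * 2 ^ p) := by
    rw [show (4 : ℝ) = 2 * 2 by norm_num, mul_rpow zero_le_two zero_le_two]
    field_simp
  -- the step size absorbs the factor `2 ^ p` of the upper Bregman bound
  have hsmall : 2 ^ p * lam ^ (min 1 (p - 1)) ≤ (p - 1) / (p * 2 ^ p) :=
    hc ▸ mul_le_mul_of_nonneg_left hlam h2p.le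
  rw [rpow_add hl0, rpow_one] at hγ
  nlinarith [mul_le_mul_of_nonneg_left hγ h2p.le,
    mul_le_mul_of_nonneg_right hsmall (mul_nonneg hl0.le hγ0)]

lemma sum_rpow_sub_sum_rpow_le_resObj (hp : 1 < p) (A : Matrix (Fin n) (Fin d) ℝ)
    (b : Fin n → ℝ) (x z : Fin d → ℝ) :
    ∑ i, |(A.mulVec x - b) i| ^ p - ∑ i, |(A.mulVec z - b) i| ^ p ≤ resObj p A b x (x - z) := by
  rw [resObj, mul_sum, ← sum_sub_distrib, ← sum_sub_distrib]
  refine sum_le_sum fun i _ => ?_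
  have hz : (A.mulVec z - b) i = (A.mulVec x - b) i - (A.mulVec (x - z)) i := by
    simp [mulVec_sub]
  rw [hz]
  exact rpow_sub_rpow_sub_le hp _ _

lemma sum_rpow_sub_smul_le {lam : ℝ} (hp : 1 < p) (hl0 : 0 < lam) (hl1 : lam ≤ 1)
    (hlam : lam ^ (min 1 (p - 1)) ≤ (p - 1) / (p * 4 ^ p)) (A : Matrix (Fin n) (Fin d) ℝ)
    (b : Fin n → ℝ) (x Δ : Fin d → ℝ) :
    ∑ i, |(A.mulVec (x - lam • Δ) - b) i| ^ p ≤
      ∑ i, |(A.mulVec x - b) i| ^ p - lam * resObj p A b x Δ := by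
  rw [resObj, mul_sum, mul_sub, mul_sum, mul_sum, ← sum_sub_distrib, ← sum_sub_distrib]
  refine sum_le_sum fun i _ => ?_
  have hnew : (A.mulVec (x - lam • Δ) - b) i = (A.mulVec x - b) i - lam * (A.mulVec Δ) i := by
    simp [mulVec_sub, mulVec_smul]
    ring
  rw [hnew]
  linarith [rpow_sub_mul_le hp hl0 hl1 hlam ((A.mulVec x - b) i) ((A.mulVec Δ) i)]

end ResidualProblem

theorem stmt9_general (n d : ℕ) (p : ℝ) (hp : 1 < p)
    (A : Matrix (Fin n) (Fin d) ℝ) (b : Fin n → ℝ)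
    (C : Matrix (Fin d) (Fin d) ℝ) (v : Fin d → ℝ)
    (OPT : ℝ)
    (hOPT : IsLeast ((fun z => ∑ i, |(A.mulVec z - b) i| ^ p) '' {z | C.mulVec z = v}) OPT)
    (x : Fin d → ℝ) (hx : C.mulVec x = v)
    (α : ℝ) (hα : 1 ≤ α)
    (M : ℝ) (hM : IsGreatest ((fun Δ => resObj p A b x Δ) '' {Δ | C.mulVec Δ = 0}) M)
    (Δt : Fin d → ℝ)
    (hΔtApprox : (1 / α) * M ≤ resObj p A b x Δt)
    (lam : ℝ) (hlam0 : 0 < lam) (hlam1 : lam ≤ 1)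
    (hlam : lam ^ (min 1 (p - 1)) ≤ (p - 1) / (p * 4 ^ p)) :
    ∑ i, |(A.mulVec (x - lam • Δt) - b) i| ^ p - OPT
      ≤ (1 - lam / α) * ((∑ i, |(A.mulVec x - b) i| ^ p) - OPT) := by
  obtain ⟨z, hz : C.mulVec z = v, hOPTz⟩ := hOPT.1
  have hgap : ∑ i, |(A.mulVec x - b) i| ^ p - OPT ≤ M := by
    rw [← hOPTz]
    exact (sum_rpow_sub_sum_rpow_le_resObj hp A b x z).trans
      (hM.2 ⟨x - z, by simp [mulVec_sub, hx, hz], rfl⟩)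
  have hdecrease := sum_rpow_sub_smul_le hp hlam0 hlam1 hlam A b x Δt
  have hprogress : 1 / α * (∑ i, |(A.mulVec x - b) i| ^ p - OPT) ≤ resObj p A b x Δt :=
    (mul_le_mul_of_nonneg_left hgap (by positivity)).trans hΔtApprox
  have hscaled := mul_le_mul_of_nonneg_left hprogress hlam0.le
  rw [sub_mul, one_mul, div_eq_mul_one_div lam α]
  linarith

/-- one step of the residual iteration.  If `OPT = min_{Cz=v}‖Az−b‖_p^p`,
`Cx = v`, `Δ̃` is an `α`-approximate solution of the residual problem at `x`, and
`λ ∈ (0,1]` with `λ^{min{1,p−1}} ≤ (p−1)/(p·4^p)`, then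
`‖A(x−λΔ̃)−b‖_p^p − OPT ≤ (1 − λ/α)(‖Ax−b‖_p^p − OPT)`. -/
theorem stmt9 (n d : ℕ) (p : ℝ) (hp : 1 < p)
    (A : Matrix (Fin n) (Fin d) ℝ) (b : Fin n → ℝ)
    (C : Matrix (Fin d) (Fin d) ℝ) (v : Fin d → ℝ)
    (OPT : ℝ)
    (hOPT : IsLeast ((fun z => ∑ i, |(A.mulVec z - b) i| ^ p) '' {z | C.mulVec z = v}) OPT)
    (x : Fin d → ℝ) (hx : C.mulVec x = v)
    (α : ℝ) (hα : 1 ≤ α)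
    (M : ℝ) (hM : IsGreatest ((fun Δ => resObj p A b x Δ) '' {Δ | C.mulVec Δ = 0}) M)
    (Δt : Fin d → ℝ) (hΔtF : C.mulVec Δt = 0)
    (hΔtApprox : (1 / α) * M ≤ resObj p A b x Δt)
    (lam : ℝ) (hlam0 : 0 < lam) (hlam1 : lam ≤ 1)
    (hlam : lam ^ (min 1 (p - 1)) ≤ (p - 1) / (p * 4 ^ p)) :
    ∑ i, |(A.mulVec (x - lam • Δt) - b) i| ^ p - OPT
      ≤ (1 - lam / α) * ((∑ i, |(A.mulVec x - b) i| ^ p) - OPT) :=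
  stmt9_general n d p hp A b C v OPT hOPT x hx α hα M hM Δt hΔtApprox lam hlam0 hlam1 hlam
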